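/- Suppose two linear Gaussian SEMs with equal error variances, X = BX + N with Cov(N) = σ² I and X = B'X + N' with Cov(N') = σ'² I, both with acyclic supports, induce the same joint Gaussian distribution on ℝ^p. Then σ² = σ'², and this common value equals min_j Var(X_j). -/
import Mathlib


open Matrix

section Aux

variable {p : ℕ}

private lemma pow_entry_nonneg (A : Matrix (Fin p) (Fin p) ℝ)
    (h : ∀ i j, 0 ≤ A i j) : ∀ n i j, 0 ≤ (A ^ n) i j := by
  intro n
  induction n with
  | zero => intro i j; simp [Matrix.one_apply]; split <;> norm_num
  | succ n ih =>
    intro i j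
    rw [pow_succ, Matrix.mul_apply]
    exact Finset.sum_nonneg fun k _ => mul_nonneg (ih i k) (h k j)

private lemma dominate (B : Matrix (Fin p) (Fin p) ℝ) :
    ∀ n j k, ((Matrix.of fun j k => if B j k ≠ 0 then (1 : ℝ) else 0) ^ n) j k = 0 →
      (B ^ n) j k = 0 := by
  set A : Matrix (Fin p) (Fin p) ℝ := Matrix.of fun j k => if B j k ≠ 0 then (1 : ℝ) else 0 with hA
  have hAnn : ∀ i j, 0 ≤ A i j := by
    intro i j; simp only [hA, Matrix.of_apply]; split <;> norm_num
  intro n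
  induction n with
  | zero => intro j k h; simpa using h
  | succ n ih =>
    intro j k h
    rw [pow_succ', Matrix.mul_apply] at h
    have hterms : ∀ i ∈ Finset.univ, A j i * (A ^ n) i k = 0 := by
      rw [← Finset.sum_eq_zero_iff_of_nonneg]
      · exact h
      · intro i _; exact mul_nonneg (hAnn j i) (pow_entry_nonneg A hAnn n i k)
    rw [pow_succ', Matrix.mul_apply]
    apply Finset.sum_eq_zero
    intro i _
    rcases mul_eq_zero.mp (hterms i (Finset.mem_univ i)) with h1 | h2
    · have : B j i = 0 := by
        by_contra hne
        simp only [hA, Matrix.of_apply, if_pos hne] at h1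
        exact one_ne_zero h1
      rw [this, zero_mul]
    · rw [ih i k h2, mul_zero]

private lemma diag_pow_ge (M : Matrix (Fin p) (Fin p) ℝ) (h : ∀ i j, 0 ≤ M i j) :
    ∀ n j, (M j j) ^ n ≤ (M ^ n) j j := by
  intro n
  induction n with
  | zero => intro j; simp [Matrix.one_apply]
  | succ n ih =>
    intro j
    have hms : (M ^ (n + 1)) j j = ∑ i, M j i * (M ^ n) i j := by
      rw [pow_succ', Matrix.mul_apply]
    rw [hms]
    calc (M j j) ^ (n + 1) = M j j * (M j j) ^ n := by ring
    _ ≤ M j j * (M ^ n) j j := mul_le_mul_of_nonneg_left (ih j) (h j j)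
    _ ≤ ∑ i, M j i * (M ^ n) i j := by
        apply Finset.single_le_sum (f := fun i => M j i * (M ^ n) i j)
        · intro i _; exact mul_nonneg (h j i) (pow_entry_nonneg M h n i j)
        · exact Finset.mem_univ j

private lemma diag_zero (A : Matrix (Fin p) (Fin p) ℝ) (h : ∀ i j, 0 ≤ A i j)
    {m : ℕ} (hm : A ^ m = 0) (n : ℕ) (hn : 1 ≤ n) (j : Fin p) : (A ^ n) j j = 0 := by
  rcases Nat.eq_zero_or_pos m with rfl | hmpos
  · simp only [pow_zero] at hm
    have := congrFun (congrFun hm j) j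
    simp [Matrix.one_apply] at this
  by_contra hne
  have hpos : 0 < (A ^ n) j j := lt_of_le_of_ne (pow_entry_nonneg A h n j j) (Ne.symm hne)
  have h1 : ((A ^ n) j j) ^ m ≤ ((A ^ n) ^ m) j j :=
    diag_pow_ge (A ^ n) (fun i k => pow_entry_nonneg A h n i k) m j
  have h2 : (A ^ n) ^ m = 0 := by
    rw [← pow_mul, mul_comm, pow_mul, hm, zero_pow]
    omega
  rw [h2] at h1
  simp only [Matrix.zero_apply] at h1
  exact absurd h1 (not_le.mpr (pow_pos hpos m))

private lemma exists_zero_row (hp : 0 < p) (A : Matrix (Fin p) (Fin p) ℝ)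
    (h : ∀ i j, 0 ≤ A i j) {m : ℕ} (hm : A ^ m = 0) : ∃ j, ∀ k, A j k = 0 := by
  by_contra hc
  push_neg at hc
  have key : ∀ n j, ∃ k, 0 < (A ^ n) j k := by
    intro n
    induction n with
    | zero =>
      intro j; exact ⟨j, by simp [Matrix.one_apply]⟩
    | succ n ih =>
      intro j
      obtain ⟨k, hk⟩ := hc j
      obtain ⟨k', hk'⟩ := ih k
      refine ⟨k', ?_⟩
      rw [pow_succ', Matrix.mul_apply]
      have h1 : 0 < A j k * (A ^ n) k k' :=
        mul_pos (lt_of_le_of_ne (h j k) (Ne.symm hk)) hk'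
      calc (0 : ℝ) < A j k * (A ^ n) k k' := h1
      _ ≤ ∑ i, A j i * (A ^ n) i k' := by
          apply Finset.single_le_sum (f := fun i => A j i * (A ^ n) i k')
          · intro i _; exact mul_nonneg (h j i) (pow_entry_nonneg A h n i k')
          · exact Finset.mem_univ k
  obtain ⟨j⟩ := Fin.pos_iff_nonempty.mp hp
  obtain ⟨k, hk⟩ := key m j
  rw [hm] at hk
  simp at hk

/-- Key lemma: for an acyclic SEM, the diagonal of the covariance matrix is
everywhere `≥ σ²` and attains `σ²` at some (parentless) vertex. -/
private lemma key (hp : 0 < p) (B : Matrix (Fin p) (Fin p) ℝ)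
    (hAdj : IsNilpotent (Matrix.of fun j k => if B j k ≠ 0 then (1 : ℝ) else 0))
    (σ2 : ℝ) (hσ2 : 0 < σ2) :
    (∃ j, ((σ2 • ((1 - B)⁻¹ * ((1 - B)⁻¹)ᵀ) : Matrix (Fin p) (Fin p) ℝ)) j j = σ2) ∧
    (∀ j, σ2 ≤ ((σ2 • ((1 - B)⁻¹ * ((1 - B)⁻¹)ᵀ) : Matrix (Fin p) (Fin p) ℝ)) j j) := by
  set A : Matrix (Fin p) (Fin p) ℝ := Matrix.of fun j k => if B j k ≠ 0 then (1 : ℝ) else 0 with hA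
  have hAnn : ∀ i j, 0 ≤ A i j := by
    intro i j; simp only [hA, Matrix.of_apply]; split <;> norm_num
  obtain ⟨m, hm⟩ := hAdj
  -- B is nilpotent
  have hBm : B ^ m = 0 := by
    ext j k
    exact dominate B m j k (by rw [hm]; rfl)
  -- explicit inverse
  set M : Matrix (Fin p) (Fin p) ℝ := ∑ i ∈ Finset.range m, B ^ i with hM
  have hinv : (1 - B)⁻¹ = M := by
    apply Matrix.inv_eq_right_inv
    rw [hM, mul_neg_geom_sum, hBm, sub_zero]
  -- diagonal entries of B^i for i ≥ 1 vanish
  have hdiagB : ∀ i, 1 ≤ i → ∀ j, (B ^ i) j j = 0 := by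
    intro i hi j
    exact dominate B i j j (diag_zero A hAnn hm i hi j)
  have hMdiag : ∀ j, M j j = 1 := by
    intro j
    rw [hM]
    simp only [Matrix.sum_apply]
    rcases Nat.eq_zero_or_pos m with rfl | hmpos
    · exfalso
      simp only [pow_zero] at hm
      have := congrFun (congrFun hm j) j
      simp [Matrix.one_apply] at this
    rw [Finset.sum_eq_single 0]
    · simp [Matrix.one_apply]
    · intro i _ hi; exact hdiagB i (Nat.one_le_iff_ne_zero.mpr hi) j
    · intro habs; exact absurd (Finset.mem_range.mpr hmpos) habs
  have hdiagSig : ∀ j, ((σ2 • ((1 - B)⁻¹ * ((1 - B)⁻¹)ᵀ) : Matrix (Fin p) (Fin p) ℝ)) j j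
      = σ2 * ∑ k, M j k * M j k := by
    intro j
    rw [hinv]
    simp [Matrix.mul_apply, Matrix.transpose_apply]
  constructor
  · -- parentless vertex
    obtain ⟨j, hj⟩ := exists_zero_row hp A hAnn hm
    have hBrow : ∀ k, B j k = 0 := by
      intro k
      by_contra hne
      have := hj k
      simp only [hA, Matrix.of_apply, if_pos hne] at this
      exact one_ne_zero this
    have hBrowpow : ∀ i, 1 ≤ i → ∀ k, (B ^ i) j k = 0 := by
      intro i hi k
      obtain ⟨i', rfl⟩ := Nat.exists_eq_add_of_le hi
      rw [add_comm, pow_succ', Matrix.mul_apply]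
      apply Finset.sum_eq_zero
      intro l _
      rw [hBrow l, zero_mul]
    have hMrow : ∀ k, M j k = (1 : Matrix (Fin p) (Fin p) ℝ) j k := by
      intro k
      rw [hM]
      simp only [Matrix.sum_apply]
      rcases Nat.eq_zero_or_pos m with rfl | hmpos
      · exfalso
        simp only [pow_zero] at hm
        have := congrFun (congrFun hm j) j
        simp [Matrix.one_apply] at this
      rw [Finset.sum_eq_single 0]
      · simp
      · intro i _ hi; exact hBrowpow i (Nat.one_le_iff_ne_zero.mpr hi) k
      · intro habs; exact absurd (Finset.mem_range.mpr hmpos) habs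
    refine ⟨j, ?_⟩
    rw [hdiagSig j]
    have : ∑ k, M j k * M j k = 1 := by
      simp only [hMrow, Matrix.one_apply]
      rw [Finset.sum_eq_single j] <;> simp (config := {contextual := true}) [eq_comm]
    rw [this, mul_one]
  · intro j
    rw [hdiagSig j]
    have h1 : (1 : ℝ) ≤ ∑ k, M j k * M j k := by
      have h2 : M j j * M j j ≤ ∑ k, M j k * M j k :=
        Finset.single_le_sum (f := fun k => M j k * M j k)
          (fun k _ => mul_self_nonneg (M j k)) (Finset.mem_univ j)
      rw [hMdiag j] at h2
      linarith
    nlinarith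

end Aux

/-- If two linear Gaussian SEMs with equal error variances and acyclic supports
induce the same joint Gaussian distribution (equivalently, the same covariance
matrix `Σ = σ²(I-B)⁻¹(I-B)⁻ᵀ = σ'²(I-B')⁻¹(I-B')⁻ᵀ`), then `σ² = σ'²`, and this
common value equals the minimal variance `min_j Var(X_j) = min_j Σ j j`. -/
theorem equal_error_variances_determined
    (p : ℕ) (hp : 0 < p)
    (B B' : Matrix (Fin p) (Fin p) ℝ)
    (hAdj : IsNilpotent (Matrix.of fun j k => if B j k ≠ 0 then (1 : ℝ) else 0))
    (hAdj' : IsNilpotent (Matrix.of fun j k => if B' j k ≠ 0 then (1 : ℝ) else 0))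
    (σ2 σ2' : ℝ) (hσ2 : 0 < σ2) (hσ2' : 0 < σ2')
    (Sig : Matrix (Fin p) (Fin p) ℝ)
    (hSig : Sig = σ2 • ((1 - B)⁻¹ * ((1 - B)⁻¹)ᵀ))
    (hSig' : Sig = σ2' • ((1 - B')⁻¹ * ((1 - B')⁻¹)ᵀ)) :
    σ2 = σ2' ∧ IsLeast {x | ∃ j, Sig j j = x} σ2 := by
  obtain ⟨⟨j, hj⟩, hlb⟩ := key hp B hAdj σ2 hσ2
  obtain ⟨⟨j', hj'⟩, hlb'⟩ := key hp B' hAdj' σ2' hσ2'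
  rw [← hSig] at hj hlb
  rw [← hSig'] at hj' hlb'
  have heq : σ2 = σ2' := le_antisymm (hj' ▸ hlb j') (hj ▸ hlb' j)
  exact ⟨heq, ⟨j, hj⟩, fun x ⟨k, hk⟩ => hk ▸ hlb k⟩
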